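/- arXiv:2103.05907 — 3 statements merged into one kernel-verified Lean document; each statement's English description precedes it below -/
import Mathlib

section
/- Let K ⊂ ℝⁿ be a centrally symmetric compact convex set with nonempty interior that is α-strongly convex with respect to ‖·‖_K. Then for all u, v ∈ ℝⁿ at which ½‖·‖²_{K°} is differentiable, the Bregman divergence satisfies D_{½‖·‖²_{K°}}(u,v) ≤ 4·((α+1)/α)·‖u − v‖²_{K°}. -/
open scoped InnerProductSpace
open scoped Pointwise
open MeasureTheory

noncomputable section

abbrev Euc (n : ℕ) := EuclideanSpace ℝ (Fin n)

/-- The polar set `K° = {d | ⟪d, x⟫ ≤ 1 for all x ∈ K}`. -/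
def polarSet {n : ℕ} (K : Set (Euc n)) : Set (Euc n) := {d | ∀ x ∈ K, ⟪d, x⟫_ℝ ≤ 1}

/-- The normal cone of `K` at `y`. -/
def normalCone {n : ℕ} (K : Set (Euc n)) (y : Euc n) : Set (Euc n) :=
  {d | ∀ x ∈ K, 0 ≤ ⟪d, y - x⟫_ℝ}

/-- A set is smooth if at each boundary point there is exactly one normal direction in `∂K°`. -/
def SmoothSet {n : ℕ} (K : Set (Euc n)) : Prop :=
  ∀ x ∈ frontier K, ∃! d, d ∈ normalCone K x ∩ frontier (polarSet K)

/-- A set is strictly convex if the midpoint of two distinct boundary points is interior. -/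
def StrictlyConvexSet {n : ℕ} (K : Set (Euc n)) : Prop :=
  ∀ x₁ ∈ frontier K, ∀ x₂ ∈ frontier K, x₁ ≠ x₂ → midpoint ℝ x₁ x₂ ∈ interior K

/-- `(α, q)`-uniform convexity of a set w.r.t. its gauge. -/
def UniformlyConvexSet {n : ℕ} (K : Set (Euc n)) (α q : ℝ) : Prop :=
  ∀ x ∈ K, ∀ y ∈ K, ∀ z ∈ K, ∀ γ ∈ Set.Icc (0:ℝ) 1,
    γ • x + (1 - γ) • y + (α / q * (γ * (1 - γ)) * gauge K (x - y) ^ q) • z ∈ K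

/-- The barrier function `F_K(x) = -ln(1 - ‖x‖_K) - ‖x‖_K`. -/
def FK {n : ℕ} (K : Set (Euc n)) (x : Euc n) : ℝ := -Real.log (1 - gauge K x) - gauge K x

/-- Fenchel conjugate of the barrier `F_K` (defined on `D_K = {‖x‖_K < 1}`). -/
def FstarK {n : ℕ} (K : Set (Euc n)) (d : Euc n) : ℝ :=
  sSup ((fun x => ⟪x, d⟫_ℝ - FK K x) '' {x | gauge K x < 1})

/-- Bregman divergence `D_F(u, v) = F(u) - F(v) - ⟪∇F(v), u - v⟫`. -/
def breg {n : ℕ} (F : Euc n → ℝ) (u v : Euc n) : ℝ :=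
  F u - F v - ⟪gradient F v, u - v⟫_ℝ

def l1Ball {n : ℕ} (r : ℝ) : Set (Euc n) := {x | ∑ i, |x i| ≤ r}
def linfBall {n : ℕ} (R : ℝ) : Set (Euc n) := {x | ∀ i, |x i| ≤ R}
def l2Ball {n : ℕ} (r : ℝ) : Set (Euc n) := Metric.closedBall 0 r
def lqBall {n : ℕ} (q r : ℝ) : Set (Euc n) := {x | ∑ i, |x i| ^ q ≤ r ^ q}

/-!
Write `‖·‖°` for the gauge of `K°` and `F = ½‖·‖°²`. Since `F` is convex and `2`-homogeneous, its
gradient at a point `u` of differentiability is `‖u‖° x` for some `x ∈ K` with `⟪u, x⟫ = ‖u‖°`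
(the bipolar theorem puts `x` in `K`). Convexity bounds `D_F(u, v)` by
`⟪∇F u - ∇F v, u - v⟫ = ‖u‖° ⟪x - y, u - v⟫ + (‖u‖° - ‖v‖°) ⟪y, u - v⟫ ≤ ‖u‖° ‖x - y‖_K t + t²`,
with `t = ‖u - v‖°`. Strong convexity of `K`, tested at the midpoint of `x` and `y`, gives
`α ‖u‖° ‖x - y‖_K ≤ 4 t`, hence `D_F(u, v) ≤ (4 / α + 1) t²`.
-/

open Filter Topology

lemma le_of_forall_pos_le_add_mul {a b c : ℝ} (h : ∀ t > 0, a ≤ b + t * c) : a ≤ b := by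
  have hlim : Tendsto (fun t : ℝ => b + t * c) (𝓝[>] 0) (𝓝 b) := by
    have : Continuous fun t : ℝ => b + t * c := by fun_prop
    simpa using this.continuousWithinAt.tendsto (s := Set.Ioi 0) (x := 0)
  exact ge_of_tendsto hlim (eventually_nhdsWithin_of_forall h)

section Gauge

variable {E : Type*} [AddCommGroup E] [Module ℝ E] {s : Set E}

lemma apply_le_mul_gauge (hs : Absorbent ℝ s) (f : E →ₗ[ℝ] ℝ) {c : ℝ} (hc : 0 ≤ c)
    (hf : ∀ y ∈ s, f y ≤ c) (x : E) : f x ≤ c * gauge s x := by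
  refine le_of_forall_pos_le_add_mul (c := c) fun t ht => ?_
  obtain ⟨r, hr, hrlt, y, hy, rfl⟩ := exists_lt_of_gauge_lt hs (lt_add_of_pos_right (gauge s x) ht)
  rw [map_smul, smul_eq_mul]
  nlinarith [hf y hy]

lemma convexOn_gauge (hs : Convex ℝ s) (habs : Absorbent ℝ s) :
    ConvexOn ℝ Set.univ (gauge s) := by
  refine ⟨convex_univ, fun x _ y _ a b ha hb _ => ?_⟩
  calc gauge s (a • x + b • y) ≤ gauge s (a • x) + gauge s (b • y) := gauge_add_le hs habs _ _
    _ = a • gauge s x + b • gauge s y := by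
      rw [gauge_smul_of_nonneg ha, gauge_smul_of_nonneg hb]

lemma convexOn_gauge_sq_div_two (hs : Convex ℝ s) (habs : Absorbent ℝ s) :
    ConvexOn ℝ Set.univ (fun x => gauge s x ^ 2 / 2) := by
  simpa [div_eq_inv_mul] using
    ((convexOn_gauge hs habs).pow (fun x _ => gauge_nonneg x) 2).smul (c := (2 : ℝ)⁻¹) (by norm_num)

lemma abs_gauge_sub_gauge_le (hs : Convex ℝ s) (hsymm : ∀ x ∈ s, -x ∈ s) (habs : Absorbent ℝ s)
    (x y : E) : |gauge s x - gauge s y| ≤ gauge s (x - y) :=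
  abs_sub_map_le_sub (gaugeSeminorm ((balanced_iff_neg_mem hs).2 hsymm) hs habs) x y

end Gauge

lemma zero_mem_interior_of_neg_mem {E : Type*} [AddCommGroup E] [Module ℝ E] [TopologicalSpace E]
    [IsTopologicalAddGroup E] [ContinuousSMul ℝ E] {s : Set E} (hs : Convex ℝ s)
    (hsymm : ∀ x ∈ s, -x ∈ s) (hint : (interior s).Nonempty) : (0 : E) ∈ interior s := by
  obtain ⟨w, hw⟩ := hint
  have hneg : -w ∈ interior s :=
    interior_maximal (fun x hx => by simpa using hsymm _ (interior_subset (Set.mem_neg.1 hx)))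
      isOpen_interior.neg (Set.neg_mem_neg.2 hw)
  simpa using hs.interior hw hneg (by norm_num : (0 : ℝ) ≤ 1 / 2) (by norm_num : (0 : ℝ) ≤ 1 / 2)
    (by norm_num)

section Gradient

variable {E : Type*} [NormedAddCommGroup E] [InnerProductSpace ℝ E] [CompleteSpace E]
  {F : E → ℝ} {u : E}

lemma DifferentiableAt.hasDerivAt_comp_lineMap (hu : DifferentiableAt ℝ F u) (w : E) :
    HasDerivAt (fun t : ℝ => F (AffineMap.lineMap u w t)) ⟪gradient F u, w - u⟫_ℝ 0 := by
  have hF : HasFDerivAt F (InnerProductSpace.toDual ℝ E (gradient F u))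
      (AffineMap.lineMap u w (0 : ℝ)) := by
    simpa using hu.hasGradientAt.hasFDerivAt
  exact hF.comp_hasDerivAt 0 AffineMap.hasDerivAt_lineMap

lemma ConvexOn.add_inner_gradient_le (hF : ConvexOn ℝ Set.univ F) (hu : DifferentiableAt ℝ F u)
    (w : E) : F u + ⟪gradient F u, w - u⟫_ℝ ≤ F w := by
  have hline : ConvexOn ℝ Set.univ (fun t : ℝ => F (AffineMap.lineMap u w t)) := by
    have := hF.comp_affineMap (AffineMap.lineMap u w : ℝ →ᵃ[ℝ] E)
    rwa [Set.preimage_univ] at this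
  have := hline.le_slope_of_hasDerivAt (Set.mem_univ 0) (Set.mem_univ 1) one_pos
    (hu.hasDerivAt_comp_lineMap w)
  rw [slope_def_field, AffineMap.lineMap_apply_one, AffineMap.lineMap_apply_zero, sub_zero,
    div_one] at this
  linarith

variable {s : Set E}

lemma inner_gradient_gauge_sq_le (hs : Convex ℝ s) (habs : Absorbent ℝ s)
    (hu : DifferentiableAt ℝ (fun x => gauge s x ^ 2 / 2) u) (e : E) :
    ⟪gradient (fun x => gauge s x ^ 2 / 2) u, e⟫_ℝ ≤ gauge s u * gauge s e := by
  refine le_of_forall_pos_le_add_mul (c := gauge s e ^ 2 / 2) fun t ht => ?_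
  have hsub := (convexOn_gauge_sq_div_two hs habs).add_inner_gradient_le hu (u + t • e)
  have htri : gauge s (u + t • e) ≤ gauge s u + t * gauge s e := by
    simpa [gauge_smul_of_nonneg ht.le] using gauge_add_le hs habs u (t • e)
  have hsq := pow_le_pow_left₀ (gauge_nonneg _) htri 2
  rw [add_sub_cancel_left, real_inner_smul_right] at hsub
  refine le_of_mul_le_mul_left ?_ ht
  nlinarith

lemma inner_gradient_gauge_sq_self (hu : DifferentiableAt ℝ (fun x => gauge s x ^ 2 / 2) u) :
    ⟪gradient (fun x => gauge s x ^ 2 / 2) u, u⟫_ℝ = gauge s u ^ 2 := by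
  set F := fun x => gauge s x ^ 2 / 2
  have hF : HasFDerivAt F (InnerProductSpace.toDual ℝ E (gradient F u)) ((1 : ℝ) • u) := by
    simpa using hu.hasGradientAt.hasFDerivAt
  -- Euler's identity: near `t = 1`, `F (t • u) = t ^ 2 * F u`; compare the derivatives at `t = 1`.
  have hchain : HasDerivAt (fun t : ℝ => F (t • u)) ⟪gradient F u, u⟫_ℝ 1 := by
    have := hF.comp_hasDerivAt 1 ((hasDerivAt_id (1 : ℝ)).smul_const u)
    rwa [one_smul, InnerProductSpace.toDual_apply_apply] at this
  have hhom : HasDerivAt (fun t : ℝ => F (t • u)) (gauge s u ^ 2) 1 := by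
    have hpoly : HasDerivAt (fun t : ℝ => t ^ 2 * (gauge s u ^ 2 / 2)) (gauge s u ^ 2) 1 :=
      ((hasDerivAt_pow 2 (1 : ℝ)).mul_const _).congr_deriv (by norm_num; ring)
    refine hpoly.congr_of_eventuallyEq ?_
    filter_upwards [lt_mem_nhds one_pos] with t ht
    simp only [F, gauge_smul_of_nonneg ht.le, smul_eq_mul]
    ring
  exact hchain.unique hhom

end Gradient

section Polar

variable {n : ℕ} {K : Set (Euc n)}

lemma convex_polarSet : Convex ℝ (polarSet K) := by
  intro d hd e he a b ha hb hab x hx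
  rw [inner_add_left, real_inner_smul_left, real_inner_smul_left]
  nlinarith [hd x hx, he x hx]

lemma neg_mem_polarSet (hK : ∀ x ∈ K, -x ∈ K) : ∀ d ∈ polarSet K, -d ∈ polarSet K :=
  fun d hd x hx => by simpa [inner_neg_left, ← inner_neg_right] using hd (-x) (hK x hx)

lemma polarSet_mem_nhds_zero (hK : Bornology.IsBounded K) : polarSet K ∈ 𝓝 (0 : Euc n) := by
  obtain ⟨R, hR, hKR⟩ := hK.subset_closedBall_lt 0 0
  refine Filter.mem_of_superset (Metric.closedBall_mem_nhds 0 (inv_pos.2 hR)) fun d hd x hx => ?_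
  calc ⟪d, x⟫_ℝ ≤ ‖d‖ * ‖x‖ := real_inner_le_norm d x
    _ ≤ R⁻¹ * R := mul_le_mul (mem_closedBall_zero_iff.1 hd) (mem_closedBall_zero_iff.1 (hKR hx))
        (norm_nonneg _) (inv_nonneg.2 hR.le)
    _ = 1 := inv_mul_cancel₀ hR.ne'

lemma inner_le_gauge_polarSet (habs : Absorbent ℝ (polarSet K)) (d : Euc n) {x : Euc n}
    (hx : x ∈ K) : ⟪d, x⟫_ℝ ≤ gauge (polarSet K) d := by
  simpa [real_inner_comm] using apply_le_mul_gauge habs (innerₛₗ ℝ x) zero_le_one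
    (fun e he => by simpa [real_inner_comm] using he x hx) d

lemma inner_le_gauge_polarSet_mul_gauge (habsP : Absorbent ℝ (polarSet K)) (habsK : Absorbent ℝ K)
    (d w : Euc n) : ⟪d, w⟫_ℝ ≤ gauge (polarSet K) d * gauge K w :=
  apply_le_mul_gauge habsK (innerₛₗ ℝ d) (gauge_nonneg d)
    (fun _ hy => inner_le_gauge_polarSet habsP d hy) w

lemma mem_of_forall_inner_polarSet_le_one (hKconv : Convex ℝ K) (hKcl : IsClosed K)
    (h0 : (0 : Euc n) ∈ K) {x : Euc n} (hx : ∀ d ∈ polarSet K, ⟪d, x⟫_ℝ ≤ 1) : x ∈ K := by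
  by_contra hxK
  obtain ⟨f, r, hfK, hfx⟩ := geometric_hahn_banach_closed_point hKconv hKcl hxK
  have hr : 0 < r := by simpa using hfK 0 h0
  set e := (InnerProductSpace.toDual ℝ (Euc n)).symm f
  have he : ∀ y, ⟪e, y⟫_ℝ = f y := fun y => InnerProductSpace.toDual_symm_apply
  have hpolar : r⁻¹ • e ∈ polarSet K := fun y hy => by
    rw [real_inner_smul_left, he, inv_mul_le_one₀ hr]
    exact (hfK y hy).le
  have := hx _ hpolar
  rw [real_inner_smul_left, he, inv_mul_le_one₀ hr] at this
  linarith

lemma exists_mem_gradient_gauge_polarSet_sq_eq_smul (hKconv : Convex ℝ K) (hKcl : IsClosed K)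
    (h0 : (0 : Euc n) ∈ K) (habs : Absorbent ℝ (polarSet K)) {u : Euc n}
    (hu : DifferentiableAt ℝ (fun d => gauge (polarSet K) d ^ 2 / 2) u) :
    ∃ x ∈ K, gradient (fun d => gauge (polarSet K) d ^ 2 / 2) u = gauge (polarSet K) u • x ∧
      ⟪u, x⟫_ℝ = gauge (polarSet K) u := by
  have hle := inner_gradient_gauge_sq_le convex_polarSet habs hu
  have heuler := inner_gradient_gauge_sq_self hu
  set g := gradient (fun d => gauge (polarSet K) d ^ 2 / 2) u
  set a := gauge (polarSet K) u
  rcases eq_or_ne a 0 with ha | ha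
  · have hg : g = 0 := by
      have := hle g
      rw [ha, zero_mul, real_inner_self_nonpos] at this
      exact this
    exact ⟨0, h0, by rw [hg, smul_zero], by rw [inner_zero_right, ha]⟩
  refine ⟨a⁻¹ • g, mem_of_forall_inner_polarSet_le_one hKconv hKcl h0 fun d hd => ?_,
    (smul_inv_smul₀ ha g).symm, ?_⟩
  · rw [real_inner_smul_right, real_inner_comm, inv_mul_le_iff₀ ((gauge_nonneg u).lt_of_ne' ha),
      mul_one]
    exact (hle d).trans (mul_le_of_le_one_right (gauge_nonneg u) (gauge_le_one_of_mem hd))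
  · rw [real_inner_smul_right, real_inner_comm, heuler]
    field_simp

end Polar

lemma breg_le_inner_gradient_sub {n : ℕ} {F : Euc n → ℝ} (hF : ConvexOn ℝ Set.univ F) {u : Euc n}
    (hu : DifferentiableAt ℝ F u) (v : Euc n) :
    breg F u v ≤ ⟪gradient F u - gradient F v, u - v⟫_ℝ := by
  have := hF.add_inner_gradient_le hu v
  rw [← neg_sub u v, inner_neg_right] at this
  rw [breg, inner_sub_left]
  linarith

section StronglyConvex

variable {n : ℕ} {K : Set (Euc n)}

/-- Test the points `(x + y)/2 + (α/8)‖x - y‖²_K z ∈ K`, `z = x` against `u` and `z = y` against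
`v`, and add. -/
lemma mul_add_mul_gauge_sub_le {α : ℝ} (hsc : UniformlyConvexSet K α 2)
    (habsP : Absorbent ℝ (polarSet K)) (habsK : Absorbent ℝ K) {x y u v : Euc n}
    (hx : x ∈ K) (hy : y ∈ K) (hux : ⟪u, x⟫_ℝ = gauge (polarSet K) u)
    (hvy : ⟪v, y⟫_ℝ = gauge (polarSet K) v) :
    α * (gauge (polarSet K) u + gauge (polarSet K) v) * gauge K (x - y)
      ≤ 4 * gauge (polarSet K) (u - v) := by
  have hhalf : (1 / 2 : ℝ) ∈ Set.Icc 0 1 := ⟨by norm_num, by norm_num⟩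
  have hu := inner_le_gauge_polarSet habsP u (hsc x hx y hy x hx _ hhalf)
  have hv := inner_le_gauge_polarSet habsP v (hsc x hx y hy y hy _ hhalf)
  have huv := inner_le_gauge_polarSet_mul_gauge habsP habsK (u - v) (x - y)
  simp only [inner_add_right, inner_sub_left, inner_sub_right, real_inner_smul_right,
    Real.rpow_two, hux, hvy] at hu hv huv
  rcases (gauge_nonneg (x - y)).eq_or_lt with hs | hs
  · rw [← hs, mul_zero]
    exact mul_nonneg zero_le_four (gauge_nonneg _)
  · refine le_of_mul_le_mul_right ?_ hs
    linarith

lemma breg_gauge_polarSet_sq_le (hKsymm : ∀ x ∈ K, -x ∈ K) (habsP : Absorbent ℝ (polarSet K))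
    (habsK : Absorbent ℝ K) {u v x y : Euc n}
    (hu : DifferentiableAt ℝ (fun d => gauge (polarSet K) d ^ 2 / 2) u) (hy : y ∈ K)
    (hgx : gradient (fun d => gauge (polarSet K) d ^ 2 / 2) u = gauge (polarSet K) u • x)
    (hgy : gradient (fun d => gauge (polarSet K) d ^ 2 / 2) v = gauge (polarSet K) v • y) :
    breg (fun d => gauge (polarSet K) d ^ 2 / 2) u v
      ≤ gauge (polarSet K) u * gauge K (x - y) * gauge (polarSet K) (u - v)
        + gauge (polarSet K) (u - v) ^ 2 := by
  set t := gauge (polarSet K) (u - v)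
  have hxy : ⟪x - y, u - v⟫_ℝ ≤ t * gauge K (x - y) := by
    rw [real_inner_comm]
    exact inner_le_gauge_polarSet_mul_gauge habsP habsK (u - v) (x - y)
  have hab : |gauge (polarSet K) u - gauge (polarSet K) v| ≤ t :=
    abs_gauge_sub_gauge_le convex_polarSet (neg_mem_polarSet hKsymm) habsP u v
  have hyuv : |⟪y, u - v⟫_ℝ| ≤ t := by
    rw [real_inner_comm, abs_le, neg_le, ← inner_neg_right]
    exact ⟨inner_le_gauge_polarSet habsP _ (hKsymm y hy), inner_le_gauge_polarSet habsP _ hy⟩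
  calc breg (fun d => gauge (polarSet K) d ^ 2 / 2) u v
      ≤ ⟪gauge (polarSet K) u • x - gauge (polarSet K) v • y, u - v⟫_ℝ := by
        rw [← hgx, ← hgy]
        exact breg_le_inner_gradient_sub (convexOn_gauge_sq_div_two convex_polarSet habsP) hu v
    _ = gauge (polarSet K) u * ⟪x - y, u - v⟫_ℝ
          + (gauge (polarSet K) u - gauge (polarSet K) v) * ⟪y, u - v⟫_ℝ := by
        simp only [inner_sub_left, real_inner_smul_left]
        ring
    _ ≤ gauge (polarSet K) u * (t * gauge K (x - y)) + t * t := by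
        refine add_le_add (mul_le_mul_of_nonneg_left hxy (gauge_nonneg u)) ?_
        refine (le_abs_self _).trans ?_
        rw [abs_mul]
        exact mul_le_mul hab hyuv (abs_nonneg _) (gauge_nonneg _)
    _ = _ := by ring

end StronglyConvex

/-- Upper bound on the Bregman divergence of `½‖·‖²_{K°}` for an
`α`-strongly convex set `K` (i.e. `(α,2)`-uniformly convex). -/
theorem bregman_upper_bound_stronglyConvex {n : ℕ}
    (K : Set (Euc n)) (hKcomp : IsCompact K) (hKconv : Convex ℝ K)
    (hKsymm : ∀ x ∈ K, -x ∈ K) (hKint : (interior K).Nonempty)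
    (α : ℝ) (hα : 0 < α)
    (hsc : UniformlyConvexSet K α 2)
    (u v : Euc n)
    (hu : DifferentiableAt ℝ (fun d => gauge (polarSet K) d ^ 2 / 2) u)
    (hv : DifferentiableAt ℝ (fun d => gauge (polarSet K) d ^ 2 / 2) v) :
    breg (fun d => gauge (polarSet K) d ^ 2 / 2) u v
      ≤ 4 * ((α + 1) / α) * gauge (polarSet K) (u - v) ^ 2 := by
  have h0K : (0 : Euc n) ∈ interior K := zero_mem_interior_of_neg_mem hKconv hKsymm hKint
  have habsK : Absorbent ℝ K := absorbent_nhds_zero (mem_interior_iff_mem_nhds.1 h0K)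
  have habsP : Absorbent ℝ (polarSet K) :=
    absorbent_nhds_zero (polarSet_mem_nhds_zero hKcomp.isBounded)
  obtain ⟨x, hx, hgx, hux⟩ := exists_mem_gradient_gauge_polarSet_sq_eq_smul hKconv
    hKcomp.isClosed (interior_subset h0K) habsP hu
  obtain ⟨y, hy, hgy, hvy⟩ := exists_mem_gradient_gauge_polarSet_sq_eq_smul hKconv
    hKcomp.isClosed (interior_subset h0K) habsP hv
  have hbreg := breg_gauge_polarSet_sq_le hKsymm habsP habsK hu hy hgx hgy
  have hsc' := mul_add_mul_gauge_sub_le hsc habsP habsK hx hy hux hvy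
  set a := gauge (polarSet K) u
  set s := gauge K (x - y)
  set t := gauge (polarSet K) (u - v)
  have hαas : α * a * s ≤ 4 * t :=
    le_trans (mul_le_mul_of_nonneg_right (mul_le_mul_of_nonneg_left
      (le_add_of_nonneg_right (gauge_nonneg v)) hα.le) (gauge_nonneg _)) hsc'
  rw [mul_div_assoc', div_mul_eq_mul_div, le_div_iff₀ hα]
  calc breg (fun d => gauge (polarSet K) d ^ 2 / 2) u v * α ≤ (a * s * t + t ^ 2) * α := by gcongr
    _ = α * a * s * t + α * t ^ 2 := by ring
    _ ≤ 4 * t * t + α * t ^ 2 := by gcongr; exact gauge_nonneg _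
    _ ≤ 4 * (α + 1) * t ^ 2 := by nlinarith [mul_nonneg hα.le (sq_nonneg t)]
end
end

section
/- Let K ⊂ ℝⁿ be a compact set that is strictly convex, smooth, and has 0 in its interior, and define F_K(x) = −ln(1 − ‖x‖_K) − ‖x‖_K on D_K = {x ∈ ℝⁿ : ‖x‖_K < 1}. Then F_K is a Legendre function on D_K: it is strictly convex with continuous first partial derivatives on D_K, and ‖∇F_K(x)‖ → +∞ as x tends to the boundary of D_K; moreover its Fenchel conjugate F_K* is differentiable on all of ℝⁿ, and K is contained in the closure of D_K. -/
open scoped InnerProductSpace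
open scoped Pointwise
open MeasureTheory

noncomputable section

/-!
Write `F_K = φ ∘ ‖·‖_K` with `φ t = -log (1 - t) - t`, strictly convex and strictly increasing
on `[0, 1)`. The gauge is the support function of the polar `K°`; smoothness of `K` makes the
maximiser `d(x)` of `⟪·, x⟫` on `K°` unique for `x ≠ 0`, so by compactness of `K°` it depends
continuously on `x` and, by Danskin's argument, `∇F_K(x) = φ'(‖x‖_K) • d(x)`. Since `‖d(x)‖`
is bounded below and `φ'(t) → ∞` as `t → 1`, the gradient blows up at the boundary. Strict
convexity of `K` makes the gauge drop strictly between two distinct points of a level set,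
which turns convexity of `F_K` into strict convexity. Dually `F_K* = ψ ∘ h_K`, where
`ψ s = s - log (1 + s)` is the conjugate of `φ` and `h_K` is the support function of `K`, whose
maximisers are unique for `d ≠ 0` by strict convexity. At the origin both `F_K` and `F_K*` are
squeezed by quadratic bounds.
-/

open Filter Topology Set

def barrierProfile (t : ℝ) : ℝ := -Real.log (1 - t) - t

/-- The convex conjugate of `barrierProfile`. -/
def barrierProfileConj (s : ℝ) : ℝ := s - Real.log (1 + s)

theorem hasDerivAt_barrierProfile {t : ℝ} (ht : t < 1) :
    HasDerivAt barrierProfile ((1 - t)⁻¹ - 1) t := by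
  have h : HasDerivAt (fun u => -Real.log (1 - u) - u) (-(-1 / (1 - t)) - 1) t :=
    ((hasDerivAt_id' t).const_sub 1 |>.log (sub_ne_zero.2 ht.ne')).neg.sub (hasDerivAt_id' t)
  exact h.congr_deriv (by ring)

theorem hasDerivAt_barrierProfileConj {s : ℝ} (hs : -1 < s) :
    HasDerivAt barrierProfileConj (1 - (1 + s)⁻¹) s := by
  have h : HasDerivAt (fun u => u - Real.log (1 + u)) (1 - 1 / (1 + s)) s :=
    (hasDerivAt_id' s).sub ((hasDerivAt_id' s).const_add 1 |>.log (by linarith))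
  exact h.congr_deriv (by ring)

theorem strictMonoOn_barrierProfile : StrictMonoOn barrierProfile (Ico 0 1) := by
  refine strictMonoOn_of_deriv_pos (convex_Ico 0 1)
    (fun t ht => (hasDerivAt_barrierProfile ht.2).continuousAt.continuousWithinAt) ?_
  rw [interior_Ico]
  rintro t ⟨ht0, ht1⟩
  rw [(hasDerivAt_barrierProfile ht1).deriv, sub_pos]
  exact one_lt_inv₀ (by linarith) |>.mpr (by linarith)

theorem strictConvexOn_barrierProfile : StrictConvexOn ℝ (Ico 0 1) barrierProfile := by
  refine StrictMonoOn.strictConvexOn_of_deriv (convex_Ico 0 1)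
    (fun t ht => (hasDerivAt_barrierProfile ht.2).continuousAt.continuousWithinAt) ?_
  rw [interior_Ico]
  rintro t ⟨-, ht⟩ u ⟨-, hu⟩ htu
  rw [(hasDerivAt_barrierProfile ht).deriv, (hasDerivAt_barrierProfile hu).deriv]
  gcongr

theorem mul_sub_barrierProfile_le {t s : ℝ} (ht : t < 1) (hs : -1 < s) :
    t * s - barrierProfile t ≤ barrierProfileConj s := by
  have h := Real.log_le_sub_one_of_pos (mul_pos (sub_pos.2 ht) (neg_lt_iff_pos_add'.1 hs))
  rw [Real.log_mul (by linarith) (by linarith)] at h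
  unfold barrierProfile barrierProfileConj
  nlinarith

theorem mul_sub_barrierProfile_eq {s : ℝ} (hs : -1 < s) :
    s / (1 + s) * s - barrierProfile (s / (1 + s)) = barrierProfileConj s := by
  have h1s : 0 < 1 + s := by linarith
  have : 1 - s / (1 + s) = (1 + s)⁻¹ := by field_simp; ring
  rw [barrierProfile, barrierProfileConj, this, Real.log_inv]
  field_simp
  ring

theorem barrierProfile_nonneg {t : ℝ} (ht : t < 1) : 0 ≤ barrierProfile t := by
  simpa [barrierProfileConj] using mul_sub_barrierProfile_le ht (s := 0) (by norm_num)

theorem barrierProfileConj_nonneg {s : ℝ} (hs : -1 < s) : 0 ≤ barrierProfileConj s := by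
  simpa [barrierProfile] using mul_sub_barrierProfile_le (t := 0) one_pos hs

theorem barrierProfile_le_two_mul_sq {t : ℝ} (ht : t ≤ 1 / 2) :
    barrierProfile t ≤ 2 * t ^ 2 := by
  have h := Real.log_le_sub_one_of_pos (inv_pos.2 (by linarith : 0 < 1 - t))
  rw [Real.log_inv] at h
  have : (1 - t)⁻¹ ≤ 1 + t + 2 * t ^ 2 := by
    rw [inv_le_iff_one_le_mul₀ (by linarith)]
    nlinarith
  unfold barrierProfile
  linarith

theorem barrierProfileConj_le_sq {s : ℝ} (hs : 0 ≤ s) : barrierProfileConj s ≤ s ^ 2 := by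
  have h := Real.log_le_sub_one_of_pos (inv_pos.2 (by linarith : 0 < 1 + s))
  rw [Real.log_inv] at h
  have : (1 + s)⁻¹ ≤ 1 - s + s ^ 2 := by
    rw [inv_le_iff_one_le_mul₀ (by linarith)]
    nlinarith
  unfold barrierProfileConj
  linarith

theorem StrictConvexOn.comp_convexOn_of_strictMonoOn {E : Type*} [AddCommGroup E] [Module ℝ E]
    {s : Set E} {I : Set ℝ} {g : E → ℝ} {φ : ℝ → ℝ} (hφ : StrictConvexOn ℝ I φ)
    (hφm : StrictMonoOn φ I) (hg : ConvexOn ℝ s g) (hgI : MapsTo g s I)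
    (hg_lt : ∀ ⦃x⦄, x ∈ s → ∀ ⦃y⦄, y ∈ s → x ≠ y → g x = g y →
      ∀ ⦃a b : ℝ⦄, 0 < a → 0 < b → a + b = 1 → g (a • x + b • y) < g x) :
    StrictConvexOn ℝ s (φ ∘ g) := by
  refine ⟨hg.1, fun x hx y hy hxy a b ha hb hab => ?_⟩
  have hcombo : a • x + b • y ∈ s := hg.1 hx hy ha.le hb.le hab
  rcases eq_or_ne (g x) (g y) with hgxy | hgxy
  · calc φ (g (a • x + b • y)) < φ (g x) :=
          hφm (hgI hcombo) (hgI hx) (hg_lt hx hy hxy hgxy ha hb hab)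
      _ = a • φ (g x) + b • φ (g y) := by rw [← hgxy, ← add_smul, hab, one_smul]
  · calc φ (g (a • x + b • y)) ≤ φ (a • g x + b • g y) :=
          hφm.monotoneOn (hgI hcombo) (hφ.1 (hgI hx) (hgI hy) ha.le hb.le hab)
            (hg.2 hx hy ha.le hb.le hab)
      _ < a • φ (g x) + b • φ (g y) := hφ.2 (hgI hx) (hgI hy) hgxy ha hb hab

section Gauge

variable {E : Type*} [NormedAddCommGroup E] [NormedSpace ℝ E] {K : Set E}

theorem convexOn_gauge_s7 (hKv : Convex ℝ K) (hK0 : K ∈ 𝓝 0) : ConvexOn ℝ univ (gauge K) := by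
  refine ⟨convex_univ, fun x _ y _ a b ha hb _ => ?_⟩
  calc gauge K (a • x + b • y) ≤ gauge K (a • x) + gauge K (b • y) :=
        gauge_add_le hKv (absorbent_nhds_zero hK0) _ _
    _ = a • gauge K x + b • gauge K y := by
        rw [gauge_smul_of_nonneg ha, gauge_smul_of_nonneg hb]

theorem gauge_pos_of_isBounded (hK0 : K ∈ 𝓝 0) (hKb : Bornology.IsBounded K) {x : E}
    (hx : x ≠ 0) : 0 < gauge K x :=
  (gauge_pos (absorbent_nhds_zero hK0) ((NormedSpace.isVonNBounded_iff ℝ).2 hKb)).2 hx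

theorem mem_of_gauge_le_one (hKv : Convex ℝ K) (hK0 : K ∈ 𝓝 0) (hKcl : IsClosed K) {x : E}
    (hx : gauge K x ≤ 1) : x ∈ K :=
  hKcl.closure_subset ((gauge_le_one_iff_mem_closure hKv hK0).1 hx)

theorem gauge_inv_smul_self {x : E} (hx : 0 < gauge K x) :
    gauge K ((gauge K x)⁻¹ • x) = 1 := by
  rw [gauge_smul_of_nonneg (inv_nonneg.2 hx.le), smul_eq_mul, inv_mul_cancel₀ hx.ne']

theorem StrictConvex.gauge_combo_lt (hK : StrictConvex ℝ K) (hK0 : K ∈ 𝓝 0)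
    (hKcl : IsClosed K) (hKb : Bornology.IsBounded K) {x y : E} (hxy : x ≠ y)
    (hg : gauge K x = gauge K y) {a b : ℝ} (ha : 0 < a) (hb : 0 < b) (hab : a + b = 1) :
    gauge K (a • x + b • y) < gauge K x := by
  have hx : 0 < gauge K x := by
    refine gauge_pos_of_isBounded hK0 hKb fun hx0 => hxy ?_
    subst hx0
    rw [gauge_zero, eq_comm, gauge_eq_zero (absorbent_nhds_zero hK0)
      ((NormedSpace.isVonNBounded_iff ℝ).2 hKb)] at hg
    exact hg.symm
  set c := gauge K x
  have hmem : ∀ z, gauge K z = c → c⁻¹ • z ∈ K := fun z hz =>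
    mem_of_gauge_le_one hK.convex hK0 hKcl (by rw [← hz, gauge_inv_smul_self (hz ▸ hx)])
  have hint := hK (hmem x rfl) (hmem y hg.symm)
    (fun h => hxy (by simpa [hx.ne'] using congrArg (c • ·) h)) ha hb hab
  have hlt := interior_subset_gauge_lt_one K hint
  rw [smul_smul, smul_smul, mul_comm a, mul_comm b, ← smul_smul, ← smul_smul, ← smul_add,
    mem_ofPred_eq, gauge_smul_of_nonneg (inv_nonneg.2 hx.le), smul_eq_mul,
    inv_mul_lt_iff₀ hx, mul_one] at hlt
  exact hlt

end Gauge

section InnerProductSpace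

variable {E : Type*} [NormedAddCommGroup E] [InnerProductSpace ℝ E]

theorem hasGradientAt_zero_of_abs_sub_le_sq [CompleteSpace E] {f : E → ℝ} {x₀ : E} {C : ℝ}
    (h : ∀ᶠ x in 𝓝 x₀, |f x - f x₀| ≤ C * ‖x - x₀‖ ^ 2) : HasGradientAt f 0 x₀ := by
  rw [hasGradientAt_iff_isLittleO]
  simp only [inner_zero_left, sub_zero]
  have hsq : (fun x => ‖x - x₀‖ ^ 2) =o[𝓝 x₀] fun x => x - x₀ :=
    (Asymptotics.isLittleO_norm_pow_id one_lt_two).comp_tendsto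
      (tendsto_sub_nhds_zero_iff.2 tendsto_id)
  refine (Asymptotics.IsBigO.of_bound C ?_).trans_isLittleO hsq
  filter_upwards [h] with x hx
  simpa using hx

theorem HasDerivAt.comp_hasGradientAt [CompleteSpace E] {φ : ℝ → ℝ} {φ' : ℝ} {f : E → ℝ}
    {f' x : E} (hφ : HasDerivAt φ φ' (f x)) (hf : HasGradientAt f f' x) :
    HasGradientAt (φ ∘ f) (φ' • f') x := by
  rw [hasGradientAt_iff_hasFDerivAt, map_smul]
  exact hφ.comp_hasFDerivAt x (hasGradientAt_iff_hasFDerivAt.1 hf)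

theorem inner_le_gauge_mul {K : Set E} (hK0 : K ∈ 𝓝 0) {d : E} {s : ℝ}
    (hd : ∀ y ∈ K, ⟪d, y⟫_ℝ ≤ s) (x : E) : ⟪d, x⟫_ℝ ≤ gauge K x * s := by
  have hs : 0 ≤ s := by simpa using hd 0 (mem_of_mem_nhds hK0)
  have h : ∀ r ∈ Ioi (gauge K x), ⟪d, x⟫_ℝ ≤ r * s := fun r hr => by
    obtain ⟨b, hb, hbr, y, hy, rfl⟩ := exists_lt_of_gauge_lt (absorbent_nhds_zero hK0) hr
    rw [real_inner_smul_right]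
    nlinarith [hd y hy]
  exact ge_of_tendsto (((continuous_mul_const s).tendsto _).mono_left nhdsWithin_le_nhds)
    (eventually_nhdsWithin_of_forall h)

/-- `fun x => ⟪m x, x⟫` is then the support function of `C`. -/
def IsSupportSelection (C : Set E) (m : E → E) : Prop :=
  ∀ x, m x ∈ C ∧ ∀ d ∈ C, ⟪d, x⟫_ℝ ≤ ⟪m x, x⟫_ℝ

theorem IsCompact.exists_isSupportSelection {C : Set E} (hC : IsCompact C) (hne : C.Nonempty) :
    ∃ m, IsSupportSelection C m := by
  choose m hm using fun x : E =>
    hC.exists_isMaxOn hne (continuous_id.inner continuous_const).continuousOn (f := (⟪·, x⟫_ℝ))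
  exact ⟨m, fun x => ⟨(hm x).1, fun d hd => (hm x).2 hd⟩⟩

namespace IsSupportSelection

variable {C : Set E} {m : E → E} (hm : IsSupportSelection C m)
include hm

theorem mem (x : E) : m x ∈ C := (hm x).1

theorem inner_le (x : E) {d : E} (hd : d ∈ C) : ⟪d, x⟫_ℝ ≤ ⟪m x, x⟫_ℝ := (hm x).2 d hd

theorem inner_nonneg (h0 : (0 : E) ∈ C) (x : E) : 0 ≤ ⟪m x, x⟫_ℝ := by
  simpa using hm.inner_le x h0

theorem inner_sub_le_sub (x y : E) : ⟪m x, y - x⟫_ℝ ≤ ⟪m y, y⟫_ℝ - ⟪m x, x⟫_ℝ := by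
  rw [inner_sub_right]
  linarith [hm.inner_le y (hm.mem x)]

theorem sub_sub_inner_le (x y : E) :
    ⟪m y, y⟫_ℝ - ⟪m x, x⟫_ℝ - ⟪m x, y - x⟫_ℝ ≤ ‖m y - m x‖ * ‖y - x‖ := by
  have h := real_inner_le_norm (m y - m x) (y - x)
  simp only [inner_sub_left, inner_sub_right] at h ⊢
  linarith [hm.inner_le x (hm.mem y)]

theorem tendsto_inner (hC : Bornology.IsBounded C) (x₀ : E) :
    Tendsto (fun x => ⟪m x, x₀⟫_ℝ) (𝓝 x₀) (𝓝 ⟪m x₀, x₀⟫_ℝ) := by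
  obtain ⟨R, hR⟩ := hC.exists_norm_le
  have hbound : ∀ x, |⟪m x, x₀⟫_ℝ - ⟪m x₀, x₀⟫_ℝ| ≤ 2 * R * ‖x - x₀‖ := fun x => by
    have h₁ := hm.inner_le x (hm.mem x₀)
    have h₂ := real_inner_le_norm (m x - m x₀) (x - x₀)
    have h₃ : ‖m x - m x₀‖ * ‖x - x₀‖ ≤ 2 * R * ‖x - x₀‖ := by
      gcongr
      exact (norm_sub_le _ _).trans (by linarith [hR _ (hm.mem x), hR _ (hm.mem x₀)])
    rw [abs_sub_comm, abs_of_nonneg (sub_nonneg.2 (hm.inner_le x₀ (hm.mem x)))]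
    simp only [inner_sub_left, inner_sub_right] at h₂
    linarith
  rw [tendsto_iff_norm_sub_tendsto_zero]
  refine squeeze_zero (fun _ => norm_nonneg _) hbound ?_
  simpa using (by fun_prop : Continuous fun x => 2 * R * ‖x - x₀‖).tendsto x₀

theorem continuousAt (hC : IsCompact C) {x₀ : E}
    (huniq : ∀ d ∈ C, ⟪d, x₀⟫_ℝ = ⟪m x₀, x₀⟫_ℝ → d = m x₀) : ContinuousAt m x₀ := by
  refine hC.tendsto_nhds_of_unique_mapClusterPt (.of_forall hm.mem) fun d hd hcl => huniq d hd ?_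
  have hcl' : MapClusterPt ⟪d, x₀⟫_ℝ (𝓝 x₀) (fun x => ⟪m x, x₀⟫_ℝ) :=
    hcl.continuousAt_comp (f := (⟪·, x₀⟫_ℝ)) (continuous_id.inner continuous_const).continuousAt
  exact eq_of_nhds_neBot (hcl'.clusterPt.mono (hm.tendsto_inner hC.isBounded x₀))

theorem hasGradientAt [CompleteSpace E] {x₀ : E} (hcont : ContinuousAt m x₀) :
    HasGradientAt (fun x => ⟪m x, x⟫_ℝ) (m x₀) x₀ := by
  rw [hasGradientAt_iff_isLittleO, Asymptotics.isLittleO_iff]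
  intro c hc
  have hclose : ∀ᶠ x in 𝓝 x₀, ‖m x - m x₀‖ ≤ c :=
    (tendsto_iff_norm_sub_tendsto_zero.1 hcont).eventually (eventually_le_nhds hc)
  filter_upwards [hclose] with x hx
  rw [Real.norm_eq_abs, abs_of_nonneg (sub_nonneg.2 (hm.inner_sub_le_sub x₀ x))]
  exact (hm.sub_sub_inner_le x₀ x).trans (mul_le_mul_of_nonneg_right hx (norm_nonneg _))

theorem inner_lt_of_mem_interior {x p : E} (hx : x ≠ 0) (hp : p ∈ interior C) :
    ⟪p, x⟫_ℝ < ⟪m x, x⟫_ℝ := by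
  have hlim : Tendsto (fun t : ℝ => p + t • x) (𝓝[>] 0) (𝓝 p) := by
    have h : Tendsto (fun t : ℝ => p + t • x) (𝓝 0) (𝓝 (p + (0 : ℝ) • x)) :=
      (continuous_const.add (continuous_id.smul continuous_const)).tendsto 0
    rw [zero_smul, add_zero] at h
    exact h.mono_left nhdsWithin_le_nhds
  obtain ⟨t, htC, ht⟩ :=
    ((hlim.eventually (mem_interior_iff_mem_nhds.1 hp)).and self_mem_nhdsWithin).exists
  have h := hm.inner_le x htC
  rw [inner_add_left, real_inner_smul_left, real_inner_self_eq_norm_sq] at h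
  have : 0 < t * ‖x‖ ^ 2 := mul_pos ht (by positivity)
  linarith

theorem eq_of_strictConvex (hC : StrictConvex ℝ C) {x d : E} (hx : x ≠ 0) (hd : d ∈ C)
    (hdx : ⟪d, x⟫_ℝ = ⟪m x, x⟫_ℝ) : d = m x := by
  by_contra hne
  have h := hm.inner_lt_of_mem_interior hx
    (hC hd (hm.mem x) hne (half_pos one_pos) (half_pos one_pos) (add_halves 1))
  rw [inner_add_left, real_inner_smul_left, real_inner_smul_left, hdx] at h
  linarith

end IsSupportSelection

end InnerProductSpace

section Polar

variable {n : ℕ} {K : Set (Euc n)}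

theorem StrictlyConvexSet.strictConvex (hK : StrictlyConvexSet K) (hKv : Convex ℝ K)
    (hKcl : IsClosed K) : StrictConvex ℝ K := by
  refine hKv.strictConvex' fun x hx y hy hxy => ⟨⅟2, ?_⟩
  rw [← hKcl.frontier_eq] at hx hy
  exact hK x hx y hy hxy

theorem zero_mem_polarSet : (0 : Euc n) ∈ polarSet K := fun _ _ => by simp

theorem isClosed_polarSet : IsClosed (polarSet K) := by
  simp only [polarSet, ofPred_forall]
  exact isClosed_biInter fun x _ => isClosed_le (by fun_prop) continuous_const

theorem inner_le_gauge_of_mem_polarSet (hK0 : K ∈ 𝓝 0) {d : Euc n} (hd : d ∈ polarSet K)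
    (x : Euc n) : ⟪d, x⟫_ℝ ≤ gauge K x := by
  simpa using inner_le_gauge_mul hK0 hd x

theorem isCompact_polarSet (hK0 : K ∈ 𝓝 0) : IsCompact (polarSet K) := by
  obtain ⟨r, hr, hball⟩ := Metric.mem_nhds_iff.1 hK0
  refine Metric.isCompact_of_isClosed_isBounded isClosed_polarSet
    ((Metric.isBounded_iff_subset_closedBall 0).2 ⟨r⁻¹, fun d hd => ?_⟩)
  have h₁ := inner_le_gauge_of_mem_polarSet hK0 hd d
  have h₂ := mul_gauge_le_norm (x := d) hball
  rw [real_inner_self_eq_norm_sq] at h₁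
  rw [Metric.mem_closedBall, dist_zero_right, ← one_div, le_div_iff₀ hr]
  rcases (norm_nonneg d).eq_or_lt with hd0 | hd0
  · rw [← hd0]; simp
  · nlinarith

theorem exists_mem_polarSet_inner_eq_gauge (hKv : Convex ℝ K) (hK0 : K ∈ 𝓝 0) (x : Euc n) :
    ∃ d ∈ polarSet K, ⟪d, x⟫_ℝ = gauge K x := by
  rcases (gauge_nonneg (s := K) x).eq_or_lt with hx | hx
  · exact ⟨0, zero_mem_polarSet, by simp [← hx]⟩
  have hint : (gauge K x)⁻¹ • x ∉ interior K := fun h =>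
    (gauge_inv_smul_self hx).not_lt (interior_subset_gauge_lt_one K h)
  obtain ⟨f, hf₁, hf⟩ := separate_convex_open_set (mem_interior_iff_mem_nhds.2 hK0)
    hKv.interior isOpen_interior hint
  refine ⟨(InnerProductSpace.toDual ℝ (Euc n)).symm f, fun y hy => ?_, ?_⟩
  · have hKcl : K ⊆ closure (interior K) := by
      rw [hKv.closure_interior_eq_closure_of_nonempty_interior
        ⟨0, mem_interior_iff_mem_nhds.2 hK0⟩]
      exact subset_closure
    rw [InnerProductSpace.toDual_symm_apply]
    exact closure_lt_subset_le f.continuous continuous_const (closure_mono hf (hKcl hy))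
  · rw [InnerProductSpace.toDual_symm_apply]
    rw [map_smul, smul_eq_mul, inv_mul_eq_one₀ hx.ne'] at hf₁
    exact hf₁.symm

theorem gauge_eq_inner_of_isSupportSelection (hKv : Convex ℝ K) (hK0 : K ∈ 𝓝 0)
    {m : Euc n → Euc n} (hm : IsSupportSelection (polarSet K) m) (x : Euc n) :
    gauge K x = ⟪m x, x⟫_ℝ := by
  obtain ⟨d, hd, hdx⟩ := exists_mem_polarSet_inner_eq_gauge hKv hK0 x
  exact le_antisymm (hdx ▸ hm.inner_le x hd) (inner_le_gauge_of_mem_polarSet hK0 (hm.mem x) x)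

theorem mem_normalCone_inter_frontier_polarSet {z d : Euc n} (hz : z ∈ K)
    (hd : d ∈ polarSet K) (hdz : ⟪d, z⟫_ℝ = 1) : d ∈ normalCone K z ∩ frontier (polarSet K) := by
  refine ⟨fun y hy => by rw [inner_sub_right, hdz]; linarith [hd y hy], ?_⟩
  rw [isClosed_polarSet.frontier_eq]
  refine ⟨hd, fun hint => ?_⟩
  have hlim : Tendsto (fun t : ℝ => t • d) (𝓝[>] 1) (𝓝 d) := by
    have h : Tendsto (fun t : ℝ => t • d) (𝓝 1) (𝓝 ((1 : ℝ) • d)) :=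
      (continuous_id.smul continuous_const).tendsto 1
    rw [one_smul] at h
    exact h.mono_left nhdsWithin_le_nhds
  obtain ⟨t, ht, ht1⟩ :=
    ((hlim.eventually (isOpen_interior.mem_nhds hint)).and self_mem_nhdsWithin).exists
  have := interior_subset ht z hz
  rw [real_inner_smul_left, hdz, mul_one] at this
  exact lt_irrefl _ (ht1.trans_le this)

theorem SmoothSet.eq_of_inner_eq_gauge (hsmooth : SmoothSet K) (hKv : Convex ℝ K)
    (hK0 : K ∈ 𝓝 0) (hKcl : IsClosed K) {x : Euc n} (hx : 0 < gauge K x) {d₁ d₂ : Euc n}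
    (hd₁ : d₁ ∈ polarSet K) (h₁ : ⟪d₁, x⟫_ℝ = gauge K x) (hd₂ : d₂ ∈ polarSet K)
    (h₂ : ⟪d₂, x⟫_ℝ = gauge K x) : d₁ = d₂ := by
  set z := (gauge K x)⁻¹ • x
  have hz : gauge K z = 1 := gauge_inv_smul_self hx
  have hzK : z ∈ K := mem_of_gauge_le_one hKv hK0 hKcl hz.le
  have hdz : ∀ d, ⟪d, x⟫_ℝ = gauge K x → ⟪d, z⟫_ℝ = 1 := fun d hd => by
    rw [real_inner_smul_right, hd, inv_mul_cancel₀ hx.ne']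
  exact (hsmooth z ((gauge_eq_one_iff_mem_frontier hKv hK0).1 hz)).unique
    (mem_normalCone_inter_frontier_polarSet hzK hd₁ (hdz d₁ h₁))
    (mem_normalCone_inter_frontier_polarSet hzK hd₂ (hdz d₂ h₂))

theorem SmoothSet.continuousAt_of_isSupportSelection (hsmooth : SmoothSet K)
    (hKc : IsCompact K) (hKv : Convex ℝ K) (hK0 : K ∈ 𝓝 0) {m : Euc n → Euc n}
    (hm : IsSupportSelection (polarSet K) m) {x : Euc n} (hx : x ≠ 0) : ContinuousAt m x := by
  have hgauge := gauge_eq_inner_of_isSupportSelection hKv hK0 hm x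
  exact hm.continuousAt (isCompact_polarSet hK0) fun d hd hdx =>
    hsmooth.eq_of_inner_eq_gauge hKv hK0 hKc.isClosed
      (gauge_pos_of_isBounded hK0 hKc.isBounded hx) hd (hdx.trans hgauge.symm)
      (hm.mem x) hgauge.symm

theorem SmoothSet.hasGradientAt_gauge (hsmooth : SmoothSet K) (hKc : IsCompact K)
    (hKv : Convex ℝ K) (hK0 : K ∈ 𝓝 0) {m : Euc n → Euc n}
    (hm : IsSupportSelection (polarSet K) m) {x : Euc n} (hx : x ≠ 0) :
    HasGradientAt (gauge K) (m x) x :=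
  funext (gauge_eq_inner_of_isSupportSelection hKv hK0 hm) ▸
    hm.hasGradientAt (hsmooth.continuousAt_of_isSupportSelection hKc hKv hK0 hm hx)

theorem inv_le_norm_of_inner_eq_gauge {R : ℝ} (hR : 0 < R) (hK0 : K ∈ 𝓝 0)
    (hKR : K ⊆ Metric.closedBall 0 R) {x d : Euc n} (hx : x ≠ 0)
    (hd : ⟪d, x⟫_ℝ = gauge K x) : R⁻¹ ≤ ‖d‖ := by
  have h₁ : ‖x‖ / R ≤ gauge K x :=
    le_gauge_of_subset_closedBall (absorbent_nhds_zero hK0) hR.le hKR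
  have h₂ : gauge K x ≤ ‖d‖ * ‖x‖ := hd ▸ real_inner_le_norm d x
  have hx' : 0 < ‖x‖ := norm_pos_iff.2 hx
  rw [div_le_iff₀ hR] at h₁
  rw [inv_le_iff_one_le_mul₀ hR]
  nlinarith

end Polar

section Barrier

variable {n : ℕ} {K : Set (Euc n)}

theorem FK_eq_comp : FK K = barrierProfile ∘ gauge K := rfl

theorem strictConvexOn_FK (hKc : IsCompact K) (hKv : Convex ℝ K) (hK0 : K ∈ 𝓝 0)
    (hstrict : StrictlyConvexSet K) : StrictConvexOn ℝ {x | gauge K x < 1} (FK K) := by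
  have hD : Convex ℝ {x : Euc n | gauge K x < 1} := by
    simpa using (convexOn_gauge_s7 hKv hK0).convex_lt 1
  rw [FK_eq_comp]
  refine strictConvexOn_barrierProfile.comp_convexOn_of_strictMonoOn strictMonoOn_barrierProfile
    ((convexOn_gauge_s7 hKv hK0).subset (subset_univ _) hD) (fun x hx => ⟨gauge_nonneg x, hx⟩)
    fun x _ y _ hxy hg a b ha hb hab => ?_
  exact (hstrict.strictConvex hKv hKc.isClosed).gauge_combo_lt hK0 hKc.isClosed hKc.isBounded
    hxy hg ha hb hab

theorem hasGradientAt_FK_zero (hK0 : K ∈ 𝓝 0) : HasGradientAt (FK K) 0 0 := by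
  obtain ⟨r, hr, hball⟩ := Metric.mem_nhds_iff.1 hK0
  refine hasGradientAt_zero_of_abs_sub_le_sq (C := 2 / r ^ 2) ?_
  have hsmall : ∀ᶠ x in 𝓝 (0 : Euc n), gauge K x < 1 / 2 :=
    (tendsto_gauge_nhds_zero hK0).eventually (eventually_lt_nhds (by norm_num))
  filter_upwards [hsmall] with x hx
  have h₁ := barrierProfile_nonneg (hx.trans (by norm_num))
  have h₂ := barrierProfile_le_two_mul_sq hx.le
  have h₃ : gauge K x ≤ ‖x‖ / r := by
    rw [le_div_iff₀ hr, mul_comm]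
    exact mul_gauge_le_norm hball
  have h₄ : gauge K x ^ 2 ≤ (‖x‖ / r) ^ 2 := pow_le_pow_left₀ (gauge_nonneg x) h₃ 2
  have hFK0 : FK K 0 = 0 := by simp [FK]
  rw [hFK0, sub_zero, sub_zero, FK_eq_comp, Function.comp_apply, abs_of_nonneg h₁]
  calc barrierProfile (gauge K x) ≤ 2 * (‖x‖ / r) ^ 2 := by linarith
    _ = 2 / r ^ 2 * ‖x‖ ^ 2 := by ring

theorem SmoothSet.hasGradientAt_FK (hsmooth : SmoothSet K) (hKc : IsCompact K)
    (hKv : Convex ℝ K) (hK0 : K ∈ 𝓝 0) {m : Euc n → Euc n}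
    (hm : IsSupportSelection (polarSet K) m) {x : Euc n} (hx : gauge K x < 1) :
    HasGradientAt (FK K) (((1 - gauge K x)⁻¹ - 1) • m x) x := by
  rcases eq_or_ne x 0 with rfl | hx0
  · simpa using hasGradientAt_FK_zero hK0
  · exact (hasDerivAt_barrierProfile hx).comp_hasGradientAt
      (hsmooth.hasGradientAt_gauge hKc hKv hK0 hm hx0)

theorem SmoothSet.continuousOn_gradient_FK (hsmooth : SmoothSet K) (hKc : IsCompact K)
    (hKv : Convex ℝ K) (hK0 : K ∈ 𝓝 0) {m : Euc n → Euc n}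
    (hm : IsSupportSelection (polarSet K) m) :
    ContinuousOn (gradient (FK K)) {x | gauge K x < 1} := by
  have hgc := continuous_gauge hKv hK0
  have hD : IsOpen {x : Euc n | gauge K x < 1} := isOpen_lt hgc continuous_const
  intro x hx
  have hgrad : (fun y => ((1 - gauge K y)⁻¹ - 1) • m y) =ᶠ[𝓝 x] gradient (FK K) := by
    filter_upwards [hD.mem_nhds hx] with y hy
    exact ((hsmooth.hasGradientAt_FK hKc hKv hK0 hm hy).gradient).symm
  refine (ContinuousAt.congr ?_ hgrad).continuousWithinAt
  have hcoef : ContinuousAt (fun y => (1 - gauge K y)⁻¹ - 1) x :=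
    ((continuousAt_const.sub hgc.continuousAt).inv₀ (sub_ne_zero.2 (ne_of_gt hx))).sub
      continuousAt_const
  rcases eq_or_ne x 0 with rfl | hx0
  · obtain ⟨R, hR⟩ := (isCompact_polarSet hK0).isBounded.exists_norm_le
    have hcoef0 := hcoef.tendsto
    simp only [gauge_zero, sub_zero, inv_one, sub_self] at hcoef0
    simpa [ContinuousAt, gauge_zero] using
      hcoef0.zero_smul_isBoundedUnder_le (isBoundedUnder_of ⟨R, fun y => hR _ (hm.mem y)⟩)
  · exact hcoef.smul (hsmooth.continuousAt_of_isSupportSelection hKc hKv hK0 hm hx0)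

theorem SmoothSet.tendsto_norm_gradient_FK (hsmooth : SmoothSet K) (hKc : IsCompact K)
    (hKv : Convex ℝ K) (hK0 : K ∈ 𝓝 0) {m : Euc n → Euc n}
    (hm : IsSupportSelection (polarSet K) m) {y : Euc n}
    (hy : y ∈ closure {x | gauge K x < 1} \ {x | gauge K x < 1}) :
    Tendsto (fun x => ‖gradient (FK K) x‖) (𝓝[{x | gauge K x < 1}] y) atTop := by
  obtain ⟨R, hR, hKR⟩ : ∃ R > 0, K ⊆ Metric.closedBall 0 R := by
    obtain ⟨R, hKR⟩ := hKc.isBounded.subset_closedBall 0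
    exact ⟨max R 1, by positivity,
      hKR.trans (Metric.closedBall_subset_closedBall (le_max_left _ _))⟩
  have hgc := continuous_gauge hKv hK0
  have hgy : gauge K y = 1 :=
    le_antisymm (closure_lt_subset_le hgc continuous_const hy.1) (not_lt.1 hy.2)
  have hgap : Tendsto (fun x => 1 - gauge K x) (𝓝[{x | gauge K x < 1}] y) (𝓝[>] 0) := by
    refine tendsto_nhdsWithin_iff.2
      ⟨?_, eventually_nhdsWithin_of_forall fun x hx => mem_Ioi.2 (sub_pos.2 hx)⟩
    simpa [hgy] using ((hgc.tendsto y).const_sub 1).mono_left nhdsWithin_le_nhds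
  have hcoef : Tendsto (fun x => ((1 - gauge K x)⁻¹ - 1) * R⁻¹)
      (𝓝[{x | gauge K x < 1}] y) atTop :=
    (tendsto_atTop_add_const_right _ (-1) (tendsto_inv_nhdsGT_zero.comp hgap)).atTop_mul_const
      (inv_pos.2 hR)
  have hy0 : y ≠ 0 := fun h => by simp [h] at hgy
  refine tendsto_atTop_mono' _ ?_ hcoef
  filter_upwards [self_mem_nhdsWithin, nhdsWithin_le_nhds (eventually_ne_nhds hy0)]
    with x hx hx0
  have hcoef_nonneg : 0 ≤ (1 - gauge K x)⁻¹ - 1 :=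
    sub_nonneg.2 (one_le_inv₀ (sub_pos.2 hx) |>.2 (by linarith [gauge_nonneg (s := K) x]))
  rw [(hsmooth.hasGradientAt_FK hKc hKv hK0 hm hx).gradient, norm_smul, Real.norm_eq_abs,
    abs_of_nonneg hcoef_nonneg]
  exact mul_le_mul_of_nonneg_left (inv_le_norm_of_inner_eq_gauge hR hK0 hKR hx0
    (gauge_eq_inner_of_isSupportSelection hKv hK0 hm x).symm) hcoef_nonneg

theorem FstarK_eq (hK0 : K ∈ 𝓝 0) {w : Euc n → Euc n} (hw : IsSupportSelection K w)
    (d : Euc n) : FstarK K d = barrierProfileConj ⟪w d, d⟫_ℝ := by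
  set s := ⟪w d, d⟫_ℝ
  have hs : 0 ≤ s := hw.inner_nonneg (mem_of_mem_nhds hK0) d
  have hupper : ∀ x ∈ {x : Euc n | gauge K x < 1},
      ⟪x, d⟫_ℝ - FK K x ≤ barrierProfileConj s := fun x hx => by
    have h := inner_le_gauge_mul hK0 (fun y hy => real_inner_comm d y ▸ hw.inner_le d hy) x
    rw [real_inner_comm] at h
    have := mul_sub_barrierProfile_le hx (show -1 < s by linarith)
    rw [FK_eq_comp, Function.comp_apply]
    linarith
  set t := s / (1 + s)
  have ht : t ∈ Ico 0 1 := ⟨by positivity, (div_lt_one (by linarith)).2 (by linarith)⟩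
  have hgt : gauge K (t • w d) ≤ t := by
    rw [gauge_smul_of_nonneg ht.1, smul_eq_mul]
    exact mul_le_of_le_one_right ht.1 (gauge_le_one_of_mem (hw.mem d))
  have hmem : t • w d ∈ {x : Euc n | gauge K x < 1} := hgt.trans_lt ht.2
  have hlower : barrierProfileConj s ≤ ⟪t • w d, d⟫_ℝ - FK K (t • w d) := by
    rw [← mul_sub_barrierProfile_eq (show -1 < s by linarith), real_inner_smul_left,
      FK_eq_comp, Function.comp_apply]
    linarith [strictMonoOn_barrierProfile.monotoneOn ⟨gauge_nonneg _, hmem⟩ ht hgt]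
  refine IsGreatest.csSup_eq ⟨⟨t • w d, hmem, le_antisymm (hupper _ hmem) hlower⟩, ?_⟩
  rintro _ ⟨x, hx, rfl⟩
  exact hupper x hx

theorem differentiableAt_FstarK (hKc : IsCompact K) (hKv : Convex ℝ K) (hK0 : K ∈ 𝓝 0)
    (hstrict : StrictlyConvexSet K) (d : Euc n) : DifferentiableAt ℝ (FstarK K) d := by
  obtain ⟨w, hw⟩ := hKc.exists_isSupportSelection ⟨0, mem_of_mem_nhds hK0⟩
  have hs := hw.inner_nonneg (mem_of_mem_nhds hK0)
  rw [funext (FstarK_eq hK0 hw)]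
  rcases eq_or_ne d 0 with rfl | hd
  · obtain ⟨R, hR⟩ := hKc.isBounded.exists_norm_le
    refine (hasGradientAt_zero_of_abs_sub_le_sq (C := R ^ 2) (.of_forall fun e => ?_))
      |>.differentiableAt
    have h₁ : ⟪w e, e⟫_ℝ ≤ R * ‖e‖ := (real_inner_le_norm _ _).trans
      (mul_le_mul_of_nonneg_right (hR _ (hw.mem e)) (norm_nonneg e))
    have h₂ := barrierProfileConj_le_sq (hs e)
    have h₃ := barrierProfileConj_nonneg (show -1 < ⟪w e, e⟫_ℝ by linarith [hs e])
    simp only [inner_zero_right, barrierProfileConj, add_zero, Real.log_one, sub_zero] at h₂ h₃ ⊢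
    rw [abs_of_nonneg h₃]
    nlinarith [hs e]
  · have hcont : ContinuousAt w d := hw.continuousAt hKc fun y hy hyd =>
      hw.eq_of_strictConvex (hstrict.strictConvex hKv hKc.isClosed) hd hy hyd
    exact ((hasDerivAt_barrierProfileConj (by linarith [hs d])).comp_hasGradientAt
      (hw.hasGradientAt hcont)).differentiableAt

end Barrier

/-- The barrier `F_K(x) = -ln(1 - ‖x‖_K) - ‖x‖_K` is a Legendre function on
`D_K = {x | ‖x‖_K < 1}`: strictly convex with continuous first derivatives on `D_K`, gradient
norm blowing up at the boundary of `D_K`; moreover `F_K*` is differentiable on all of `ℝⁿ`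
and `K ⊆ closure D_K`. -/
theorem barrier_is_legendre {n : ℕ}
    (K : Set (Euc n)) (hKcomp : IsCompact K) (hKconv : Convex ℝ K)
    (h0 : (0 : Euc n) ∈ interior K)
    (hstrict : StrictlyConvexSet K) (hsmooth : SmoothSet K) :
    StrictConvexOn ℝ {x : Euc n | gauge K x < 1} (FK K) ∧
    (∀ x ∈ {x : Euc n | gauge K x < 1}, DifferentiableAt ℝ (FK K) x) ∧
    ContinuousOn (fun x => gradient (FK K) x) {x : Euc n | gauge K x < 1} ∧
    (∀ y ∈ closure {x : Euc n | gauge K x < 1} \ {x : Euc n | gauge K x < 1},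
      Filter.Tendsto (fun x => ‖gradient (FK K) x‖)
        (nhdsWithin y {x : Euc n | gauge K x < 1}) Filter.atTop) ∧
    (∀ d : Euc n, DifferentiableAt ℝ (FstarK K) d) ∧
    K ⊆ closure {x : Euc n | gauge K x < 1} := by
  have hK0 : K ∈ 𝓝 0 := mem_interior_iff_mem_nhds.1 h0
  obtain ⟨m, hm⟩ := (isCompact_polarSet hK0).exists_isSupportSelection ⟨0, zero_mem_polarSet⟩
  refine ⟨strictConvexOn_FK hKcomp hKconv hK0 hstrict,
    fun x hx => (hsmooth.hasGradientAt_FK hKcomp hKconv hK0 hm hx).differentiableAt,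
    hsmooth.continuousOn_gradient_FK hKcomp hKconv hK0 hm,
    fun y hy => hsmooth.tendsto_norm_gradient_FK hKcomp hKconv hK0 hm hy,
    differentiableAt_FstarK hKcomp hKconv hK0 hstrict, ?_⟩
  rw [setOfPred_gauge_lt_one_eq_interior hKconv hK0,
    hKconv.closure_interior_eq_closure_of_nonempty_interior ⟨0, h0⟩]
  exact subset_closure
end
end

section
/- Let α > 0 and q ≥ 2, and let K ⊂ ℝⁿ be a centrally symmetric compact convex set with nonempty interior that is (α,q)-uniformly convex with respect to ‖·‖_K. Then for every x ∈ K, every y ∈ ∂K, and every d ∈ N_K(y), one has ⟨d, y − x⟩ ≥ (α/q)‖x − y‖_K^q · ‖d‖_{K°}. -/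
open scoped InnerProductSpace
open scoped Pointwise
open MeasureTheory

noncomputable section

/-- Scaling inequality: for an `(α,q)`-uniformly convex set, any normal
direction `d` at a boundary point `y` satisfies
`⟪d, y - x⟫ ≥ (α/q) ‖x - y‖_K^q ‖d‖_{K°}` for every `x ∈ K`. -/
theorem scaling_inequality {n : ℕ}
    (K : Set (Euc n)) (hKcomp : IsCompact K) (hKconv : Convex ℝ K)
    (hKsymm : ∀ x ∈ K, -x ∈ K) (hKint : (interior K).Nonempty)
    (α q : ℝ) (hα : 0 < α) (hq : 2 ≤ q)
    (huc : UniformlyConvexSet K α q) :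
    ∀ x ∈ K, ∀ y ∈ frontier K, ∀ d ∈ normalCone K y,
      ⟪d, y - x⟫_ℝ ≥ α / q * gauge K (x - y) ^ q * gauge (polarSet K) d := by
  intro x hx y hy d hd
  have hKcl : IsClosed K := hKcomp.isClosed
  have hyK : y ∈ K := hKcl.frontier_subset hy
  obtain ⟨u, hu⟩ := hKint
  have huK : u ∈ K := interior_subset hu
  have h0 : (0 : Euc n) ∈ K := by
    have h := hKconv huK (hKsymm u huK) (by norm_num : (0:ℝ) ≤ 1/2)
      (by norm_num : (0:ℝ) ≤ 1/2) (by norm_num)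
    have e : (1/2 : ℝ) • u + (1/2 : ℝ) • (-u) = (0 : Euc n) := by
      rw [smul_neg]; abel
    rwa [e] at h
  set t : ℝ := gauge K (x - y) ^ q with ht
  have ht0 : 0 ≤ t := Real.rpow_nonneg (gauge_nonneg _) q
  have hc0 : 0 ≤ α / q := le_of_lt (div_pos hα (by linarith))
  have hL0 : 0 ≤ ⟪d, y - x⟫_ℝ := hd x hx
  -- key inequality
  have key : ∀ z ∈ K, α / q * t * ⟪d, z⟫_ℝ ≤ ⟪d, y - x⟫_ℝ := by
    intro z hz
    by_cases hdz : ⟪d, z⟫_ℝ ≤ 0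
    · calc α / q * t * ⟪d, z⟫_ℝ ≤ 0 := mul_nonpos_of_nonneg_of_nonpos (mul_nonneg hc0 ht0) hdz
        _ ≤ ⟪d, y - x⟫_ℝ := hL0
    · push_neg at hdz
      have step : ∀ γ ∈ Set.Ioo (0:ℝ) 1,
          α / q * (1 - γ) * t * ⟪d, z⟫_ℝ ≤ ⟪d, y - x⟫_ℝ := by
        intro γ hγ
        have hw := huc x hx y hyK z hz γ ⟨le_of_lt hγ.1, le_of_lt hγ.2⟩
        have hnc := hd _ hw
        have expand : ⟪d, y - (γ • x + (1 - γ) • y + (α / q * (γ * (1 - γ)) * t) • z)⟫_ℝ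
            = γ * ⟪d, y - x⟫_ℝ - α / q * (γ * (1 - γ)) * t * ⟪d, z⟫_ℝ := by
          simp only [inner_sub_right, inner_add_right, real_inner_smul_right]
          ring
        rw [expand] at hnc
        have h2 : α / q * (1 - γ) * t * ⟪d, z⟫_ℝ * γ ≤ ⟪d, y - x⟫_ℝ * γ := by
          nlinarith [hnc]
        exact le_of_mul_le_mul_right h2 hγ.1
      have tend : Filter.Tendsto (fun γ : ℝ => α / q * (1 - γ) * t * ⟪d, z⟫_ℝ)
          (nhdsWithin 0 (Set.Ioi 0)) (nhds (α / q * (1 - 0) * t * ⟪d, z⟫_ℝ)) := by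
        apply Filter.Tendsto.mono_left _ nhdsWithin_le_nhds
        exact (Continuous.tendsto (by continuity) 0)
      have ev : ∀ᶠ γ in nhdsWithin (0:ℝ) (Set.Ioi 0),
          α / q * (1 - γ) * t * ⟪d, z⟫_ℝ ≤ ⟪d, y - x⟫_ℝ := by
        filter_upwards [Ioo_mem_nhdsGT_of_mem (Set.mem_Ico.mpr ⟨le_refl (0:ℝ), one_pos⟩)]
          with γ hγ using step γ hγ
      have := le_of_tendsto tend ev
      simpa using this
  -- maximizer of the linear functional on K
  have hcont : ContinuousOn (fun z : Euc n => ⟪d, z⟫_ℝ) K :=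
    (continuous_const.inner continuous_id).continuousOn
  obtain ⟨z₀, hz₀K, hz₀max⟩ := hKcomp.exists_isMaxOn ⟨0, h0⟩ hcont
  set s : ℝ := ⟪d, z₀⟫_ℝ with hs
  have hs0 : 0 ≤ s := by
    have := hz₀max h0
    simpa using this
  rcases lt_or_eq_of_le hs0 with hspos | hszero
  · -- s > 0 : gauge (polarSet K) d ≤ s
    have hg : gauge (polarSet K) d ≤ s := by
      apply gauge_le_of_mem hs0
      rw [Set.mem_smul_set_iff_inv_smul_mem₀ (ne_of_gt hspos)]
      intro w hw
      rw [real_inner_smul_left]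
      rw [inv_mul_le_iff₀ hspos, mul_one]
      exact hz₀max hw
    calc α / q * t * gauge (polarSet K) d ≤ α / q * t * s :=
          mul_le_mul_of_nonneg_left hg (mul_nonneg hc0 ht0)
      _ ≤ ⟪d, y - x⟫_ℝ := key z₀ hz₀K
  · -- s = 0 : gauge (polarSet K) d = 0
    have hg : gauge (polarSet K) d = 0 := by
      refine le_antisymm ?_ (gauge_nonneg _)
      by_contra h
      push_neg at h
      have hle : gauge (polarSet K) d ≤ gauge (polarSet K) d / 2 := by
        apply gauge_le_of_mem (by linarith)
        rw [Set.mem_smul_set_iff_inv_smul_mem₀ (by positivity)]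
        intro w hw
        rw [real_inner_smul_left]
        have hdw : ⟪d, w⟫_ℝ ≤ 0 := by
          have h' : ⟪d, w⟫_ℝ ≤ s := hz₀max hw
          linarith
        have : (gauge (polarSet K) d / 2)⁻¹ * ⟪d, w⟫_ℝ ≤ 0 :=
          mul_nonpos_of_nonneg_of_nonpos (by positivity) hdw
        linarith
      linarith
    rw [hg, mul_zero]
    exact hL0
end
end
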